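/- arXiv:1212.4063 — 6 statements merged into one kernel-verified Lean document; each statement's English description precedes it below -/
import Mathlib

section
/- If P is a nonzero Poisson prime ideal of B = A[z], then Q = P ∩ A is a nonzero δ-prime ideal of A. -/
open Polynomial

/-- A Poisson bracket on a commutative `ℂ`-algebra `B`. -/
structure IsPoissonBracket {B : Type*} [CommRing B] [Algebra ℂ B]
    (br : B → B → B) : Prop where
  add_left : ∀ a b c : B, br (a + b) c = br a c + br b c
  smul_left : ∀ (r : ℂ) (a b : B), br (r • a) b = r • br a b
  antisymm : ∀ a b : B, br a b = - br b a
  jacobi : ∀ a b c : B, br a (br b c) + br b (br c a) + br c (br a b) = 0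
  leibniz : ∀ a b c : B, br a (b * c) = br a b * c + b * br a c

/-- The Poisson bracket `{-,-}_δ` on `A[z]`: zero on `A` and `{z,a} = δ a`. -/
def IsDeltaBracket {A : Type*} [CommRing A] [Algebra ℂ A] (δ : Derivation ℂ A A)
    (br : Polynomial A → Polynomial A → Polynomial A) : Prop :=
  IsPoissonBracket br ∧ (∀ a b : A, br (Polynomial.C a) (Polynomial.C b) = 0) ∧
    (∀ a : A, br Polynomial.X (Polynomial.C a) = Polynomial.C (δ a))

/-- `I` is a Poisson ideal for the bracket `br`. -/
def IsPoissonIdeal {B : Type*} [CommRing B] (br : B → B → B) (I : Ideal B) : Prop :=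
  ∀ b : B, ∀ i ∈ I, br b i ∈ I

/-- `I` is a `δ`-ideal. -/
def IsDeltaIdeal {A : Type*} [CommRing A] [Algebra ℂ A] (δ : Derivation ℂ A A)
    (I : Ideal A) : Prop :=
  ∀ a ∈ I, δ a ∈ I

/-- `P` is a `δ`-prime ideal. -/
def IsDeltaPrime {A : Type*} [CommRing A] [Algebra ℂ A] (δ : Derivation ℂ A A)
    (P : Ideal A) : Prop :=
  P ≠ ⊤ ∧ IsDeltaIdeal δ P ∧
    ∀ I J : Ideal A, IsDeltaIdeal δ I → IsDeltaIdeal δ J → I * J ≤ P → I ≤ P ∨ J ≤ P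

/-!
The prime ideal `Q = P ∩ A` is a `δ`-ideal because `δ a = {z, a}`, and a prime `δ`-ideal
is `δ`-prime. If `Q` were zero, pick `a` with `δ a ≠ 0`; then `{a, f} = -δ(a) ∂f/∂z` and
primality of `P` make `P` stable under `∂/∂z`. Differentiating an element of `P` of minimal
degree down to a nonzero constant (possible in characteristic zero) produces a nonzero element
of `Q`.
-/

theorem IsPoissonBracket.add_right {B : Type*} [CommRing B] [Algebra ℂ B]
    {br : B → B → B} (hbr : IsPoissonBracket br) (a b c : B) :
    br a (b + c) = br a b + br a c := by
  rw [hbr.antisymm, hbr.add_left, neg_add, ← hbr.antisymm, ← hbr.antisymm]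

theorem Ideal.eq_bot_of_comap_C_eq_bot_of_derivative_mem {R : Type*} [CommSemiring R]
    [IsAddTorsionFree R] {I : Ideal R[X]} (hI : I.comap C = ⊥)
    (hder : ∀ f ∈ I, derivative f ∈ I) : I = ⊥ := by
  suffices ∀ n, ∀ f ∈ I, f.natDegree = n → f = 0 from
    (Submodule.eq_bot_iff I).mpr fun f hf ↦ this _ f hf rfl
  intro n
  induction n using Nat.strong_induction_on with
  | _ n ih =>
    intro f hf hdeg
    by_cases hf0 : f.natDegree = 0
    · have hcoeff : f.coeff 0 ∈ I.comap C := by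
        rwa [Ideal.mem_comap, ← eq_C_of_natDegree_eq_zero hf0]
      rw [hI, Ideal.mem_bot] at hcoeff
      rw [eq_C_of_natDegree_eq_zero hf0, hcoeff, map_zero]
    · have hlt : (derivative f).natDegree < n := hdeg ▸ natDegree_derivative_lt hf0
      exact absurd (derivative_eq_zero.mp (ih _ hlt _ (hder f hf) rfl)) hf0

theorem Ideal.IsPrime.isDeltaPrime {A : Type*} [CommRing A] [Algebra ℂ A]
    {δ : Derivation ℂ A A} {P : Ideal A} (hP : P.IsPrime) (hδP : IsDeltaIdeal δ P) :
    IsDeltaPrime δ P :=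
  ⟨hP.ne_top, hδP, fun _ _ _ _ hIJ ↦ hP.mul_le.mp hIJ⟩

namespace IsDeltaBracket

variable {A : Type*} [CommRing A] [Algebra ℂ A] {δ : Derivation ℂ A A}
  {br : A[X] → A[X] → A[X]}

theorem bracket_C (hbr : IsDeltaBracket δ br) (a : A) (f : A[X]) :
    br (C a) f = -(C (δ a) * derivative f) := by
  obtain ⟨hpb, hCC, hXC⟩ := hbr
  have hCX : br (C a) X = -C (δ a) := by rw [hpb.antisymm, hXC]
  have hCpow (k : ℕ) : br (C a) (X ^ k) = -(C (δ a) * derivative (X ^ k : A[X])) := by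
    induction k with
    | zero => rw [pow_zero, ← C_1, hCC, derivative_C, mul_zero, neg_zero]
    | succ k ih =>
      rw [pow_succ, hpb.leibniz, ih, hCX, derivative_mul, derivative_X]
      ring
  induction f using Polynomial.induction_on' with
  | add p q hp hq => rw [hpb.add_right, hp, hq, derivative_add]; ring
  | monomial n b =>
    rw [← C_mul_X_pow_eq_monomial, hpb.leibniz, hCC, hCpow, derivative_mul, derivative_C]
    ring

theorem isDeltaIdeal_comap_C (hbr : IsDeltaBracket δ br) {P : Ideal A[X]}
    (hPois : IsPoissonIdeal br P) : IsDeltaIdeal δ (P.comap C) := fun a ha ↦ by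
  simpa only [Ideal.mem_comap, hbr.2.2] using hPois X _ ha

theorem derivative_mem (hbr : IsDeltaBracket δ br) {P : Ideal A[X]} (hP : P.IsPrime)
    (hPois : IsPoissonIdeal br P) {a : A} (ha : C (δ a) ∉ P) {f : A[X]} (hf : f ∈ P) :
    derivative f ∈ P := by
  have hmem : C (δ a) * derivative f ∈ P := by
    simpa only [hbr.bracket_C, neg_mem_iff] using hPois (C a) f hf
  exact (hP.mem_or_mem hmem).resolve_left ha

end IsDeltaBracket

theorem stmt_3_general {A : Type*} [CommRing A] [Algebra ℂ A]
    (δ : Derivation ℂ A A) (hδ : δ ≠ 0)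
    (br : Polynomial A → Polynomial A → Polynomial A) (hbr : IsDeltaBracket δ br)
    (P : Ideal (Polynomial A)) (hP : P.IsPrime) (hPois : IsPoissonIdeal br P) (hP0 : P ≠ ⊥) :
    P.comap (Polynomial.C : A →+* Polynomial A) ≠ ⊥ ∧
      IsDeltaPrime δ (P.comap (Polynomial.C : A →+* Polynomial A)) := by
  refine ⟨fun hQ ↦ hP0 ?_, (hP.comap C).isDeltaPrime (hbr.isDeltaIdeal_comap_C hPois)⟩
  obtain ⟨a, ha⟩ : ∃ a, δ a ≠ 0 := by
    by_contra! h
    exact hδ (Derivation.ext h)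
  have hCa : C (δ a) ∉ P := fun h ↦
    ha (Ideal.mem_bot.mp (hQ ▸ Ideal.mem_comap.mpr h))
  have : IsAddTorsionFree A := .of_isTorsionFree ℂ A
  exact Ideal.eq_bot_of_comap_C_eq_bot_of_derivative_mem hQ
    fun f hf ↦ hbr.derivative_mem hP hPois hCa hf

theorem stmt_3 {A : Type*} [CommRing A] [Algebra ℂ A] [IsDomain A] [IsNoetherianRing A]
    (δ : Derivation ℂ A A) (hδ : δ ≠ 0)
    (br : Polynomial A → Polynomial A → Polynomial A) (hbr : IsDeltaBracket δ br)
    (P : Ideal (Polynomial A)) (hP : P.IsPrime) (hPois : IsPoissonIdeal br P) (hP0 : P ≠ ⊥) :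
    P.comap (Polynomial.C : A →+* Polynomial A) ≠ ⊥ ∧
      IsDeltaPrime δ (P.comap (Polynomial.C : A →+* Polynomial A)) :=
  stmt_3_general δ hδ br hbr P hP hPois hP0
end

section
/- If P is a prime ideal of a commutative C-algebra A and Δ is a set of derivations of A, then the Δ-core (P : Δ), the largest Δ-ideal contained in P, is a prime ideal. -/
open Polynomial

/-- `I` is a `Δ`-ideal for a set `Δ` of derivations. -/
def IsDeltaSetIdeal {A : Type*} [CommRing A] [Algebra ℂ A] (Δ : Set (Derivation ℂ A A))
    (I : Ideal A) : Prop :=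
  ∀ δ ∈ Δ, ∀ a ∈ I, δ a ∈ I

/-!
Write `Q = (P : Δ)`. Its radical is again a `Δ`-ideal inside `P` (this is where characteristic
zero enters), so `Q` is radical. For a radical `δ`-ideal `Q` every quotient `Q : b` is a
`δ`-ideal, and for `δ`-ideals `Q, I` so is `Q : I`. Now if `ab ∈ Q` and `a ∉ Q`, the `Δ`-ideal
`K = Q : b` contains `a`, hence is not inside `P`; pick `c ∈ K \ P`. Then `Q : K` is a `Δ`-ideal
containing `b`, and it lies in `P` because `y c ∈ Q ⊆ P` with `c ∉ P`. So `b ∈ Q`.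
-/

open Set

namespace Derivation

section CharZero

variable {K A : Type*} [Field K] [CharZero K] [CommRing A] [Algebra K A]
  (D : Derivation K A A) {Q : Ideal A}

/-- Differentiating `x ^ (m + 1) * D x ^ k ∈ Q` trades one factor `x` for two factors `D x`,
at the price of dividing by `m + 1`. -/
theorem pow_add_two_mul_mem_of_pow_mul_pow_mem (hQ : MapsTo D Q Q) {x : A} {m : ℕ} :
    ∀ {k : ℕ}, x ^ m * D x ^ k ∈ Q → D x ^ (k + 2 * m) ∈ Q := by
  induction m with
  | zero => intro k h; simpa using h
  | succ m ih =>
    intro k h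
    have hunit : IsUnit ((m + 1 : ℕ) : A) := by
      rw [← _root_.map_natCast (algebraMap K A)]
      exact (IsUnit.mk0 _ (Nat.cast_ne_zero.mpr m.succ_ne_zero)).map _
    have key : ((m + 1 : ℕ) : A) * (x ^ m * D x ^ (k + 2)) =
        D (x ^ (m + 1) * D x ^ k) * D x - (k : A) * (D (D x) * (x ^ (m + 1) * D x ^ k)) := by
      rw [Derivation.leibniz, Derivation.leibniz_pow, Derivation.leibniz_pow]
      rcases k with _ | k
      · simp only [smul_eq_mul, nsmul_eq_mul]; push_cast; ring
      · simp only [Nat.add_sub_cancel, smul_eq_mul, nsmul_eq_mul]; push_cast; ring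
    have hmem : x ^ m * D x ^ (k + 2) ∈ Q := by
      rw [← Ideal.unit_mul_mem_iff_mem Q hunit, key]
      exact Q.sub_mem (Q.mul_mem_right _ (hQ h)) (Q.mul_mem_left _ (Q.mul_mem_left _ h))
    simpa [add_assoc, mul_add, add_comm] using ih hmem

theorem mapsTo_radical (hQ : MapsTo D Q Q) : MapsTo D Q.radical Q.radical :=
  fun x ⟨n, hn⟩ => ⟨0 + 2 * n, D.pow_add_two_mul_mem_of_pow_mul_pow_mem hQ (by simpa using hn)⟩

end CharZero

variable {R A : Type*} [CommRing R] [CommRing A] [Algebra R A] (D : Derivation R A A)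
  {Q : Ideal A}

theorem mapsTo_colon_singleton (hQ : MapsTo D Q Q) (hrad : Q.IsRadical) (b : A) :
    MapsTo D (Q.colon {b}) (Q.colon {b}) := by
  intro x hx
  simp only [SetLike.mem_coe, Submodule.mem_colon_singleton, smul_eq_mul] at hx ⊢
  have key : (D x * b) ^ 2 = D x * b * D (x * b) - x * b * (D b * D x) := by
    rw [Derivation.leibniz, smul_eq_mul, smul_eq_mul]; ring
  exact hrad ⟨2, key ▸ Q.sub_mem (Q.mul_mem_left _ (hQ hx)) (Q.mul_mem_right _ hx)⟩

theorem mapsTo_colon {I : Ideal A} (hQ : MapsTo D Q Q) (hI : MapsTo D I I) :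
    MapsTo D (Q.colon I) (Q.colon I) := by
  intro y hy
  simp only [SetLike.mem_coe, Submodule.mem_colon, smul_eq_mul] at hy ⊢
  intro x hx
  have key : D y * x = D (y * x) - y * D x := by
    rw [Derivation.leibniz, smul_eq_mul, smul_eq_mul]; ring
  exact key ▸ Q.sub_mem (hQ (hy x hx)) (hy _ (hI hx))

end Derivation

theorem stmt_6 {A : Type*} [CommRing A] [Algebra ℂ A]
    (Δ : Set (Derivation ℂ A A)) (P : Ideal A) (hP : P.IsPrime)
    (Q : Ideal A) (hQΔ : IsDeltaSetIdeal Δ Q) (hQP : Q ≤ P)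
    (hlargest : ∀ Q' : Ideal A, IsDeltaSetIdeal Δ Q' → Q' ≤ P → Q' ≤ Q) :
    Q.IsPrime := by
  have hrad : Q.IsRadical := hlargest _ (fun δ hδ => δ.mapsTo_radical (hQΔ δ hδ))
    ((Ideal.radical_mono hQP).trans hP.radical.le)
  refine ⟨fun htop => hP.ne_top (top_le_iff.mp (htop ▸ hQP)), fun {a b} hab => ?_⟩
  refine or_iff_not_imp_left.mpr fun ha => ?_
  have hKΔ : IsDeltaSetIdeal Δ (Q.colon {b}) :=
    fun δ hδ => δ.mapsTo_colon_singleton (hQΔ δ hδ) hrad b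
  obtain ⟨c, hcK, hcP⟩ := SetLike.not_le_iff_exists.mp fun hKP =>
    ha (hlargest _ hKΔ hKP (by simpa using hab))
  refine hlargest _ (fun δ hδ => δ.mapsTo_colon (hQΔ δ hδ) (hKΔ δ hδ)) (fun y hy => ?_) ?_
  · exact (hP.mem_or_mem (hQP (Submodule.mem_colon.mp hy c hcK))).resolve_right hcP
  · exact Submodule.mem_colon.mpr fun x hx => by simpa [mul_comm] using hx
end

section
/- The Poisson algebra B = A[z] with bracket {−,−}_δ is Poisson simple if and only if A is δ-simple (i.e., δ is a simple derivation). -/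
/-!
For fixed `a`, `{a, -}` is a `ℂ`-derivation of `A[z]`, hence determined by its values on `A` and
on `z`: `{z, -}` applies `δ` coefficientwise and `{b, -} = -δ(b) ∂_z` for `b ∈ A`. So `J A[z]` is
a Poisson ideal whenever `J` is a `δ`-ideal. Conversely, if a Poisson ideal `I` contains a nonzero
element of degree `n`, the `n`-th coefficients of the elements of `I` of degree `≤ n` form a
nonzero `δ`-ideal. If `A` is `δ`-simple it contains `1`, so `I` contains a monic `f` of degree
`≤ n`; unless `f = 1`, choosing `δ b ≠ 0` makes `{b, f} = -δ(b) f'` a nonzero element of `I` of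
smaller degree (`A` is a domain of characteristic zero), and descent on the degree gives `1 ∈ I`.
-/

open Polynomial

namespace IsPoissonBracket

variable {B : Type*} [CommRing B] [Algebra ℂ B] {br : B → B → B}

theorem add_right_s7 (h : IsPoissonBracket br) (a b c : B) : br a (b + c) = br a b + br a c := by
  rw [h.antisymm, h.add_left, neg_add, ← h.antisymm, ← h.antisymm]

theorem smul_right (h : IsPoissonBracket br) (r : ℂ) (a b : B) : br a (r • b) = r • br a b := by
  rw [h.antisymm, h.smul_left, ← smul_neg, ← h.antisymm]

theorem apply_self (h : IsPoissonBracket br) (a : B) : br a a = 0 := by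
  have two_smul_eq : (2 : ℂ) • br a a = 0 := by
    rw [two_smul]
    nth_rewrite 2 [h.antisymm]
    exact add_neg_cancel _
  simpa using two_smul_eq

def derivation (h : IsPoissonBracket br) (a : B) : Derivation ℂ B B :=
  Derivation.mk' ⟨⟨br a, h.add_right_s7 a⟩, fun r b => h.smul_right r a b⟩ fun b c => by
    simp only [LinearMap.coe_mk, AddHom.coe_mk, smul_eq_mul, h.leibniz]
    ring

@[simp]
theorem derivation_apply (h : IsPoissonBracket br) (a b : B) : h.derivation a b = br a b := rfl

theorem isPoissonIdeal_span (h : IsPoissonBracket br) {S : Set B}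
    (hS : ∀ b, ∀ s ∈ S, br b s ∈ Ideal.span S) : IsPoissonIdeal br (Ideal.span S) := by
  intro b i hi
  induction hi using Submodule.span_induction with
  | mem s hs => exact hS b s hs
  | zero => simp only [← h.derivation_apply, map_zero, zero_mem]
  | add x y _ _ hx hy => rw [h.add_right_s7]; exact add_mem hx hy
  | smul c x hx hbx =>
    rw [smul_eq_mul, h.leibniz]
    exact add_mem (Ideal.mul_mem_left _ _ hx) (Ideal.mul_mem_left _ _ hbx)

end IsPoissonBracket

theorem Derivation.coeff_polynomial_apply {R A : Type*} [CommRing R] [CommRing A] [Algebra R A]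
    (D : Derivation R A[X] A[X]) (d : Derivation R A A) (hD : ∀ a, D (C a) = C (d a))
    (p : A[X]) (i : ℕ) : (D p).coeff i = d (p.coeff i) + (derivative p * D X).coeff i := by
  induction p using Polynomial.induction_on' generalizing i with
  | add p q hp hq => simp only [map_add, coeff_add, hp, hq, add_mul]; abel
  | monomial n a =>
    rw [← C_mul_X_pow_eq_monomial, D.leibniz, D.leibniz_pow, hD, derivative_C_mul_X_pow]
    have hCn : C (a * n) * X ^ (n - 1) * D X = C a * ((n : A[X]) * (X ^ (n - 1) * D X)) := by
      rw [C_mul, C_eq_natCast]; ring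
    simp only [smul_eq_mul, nsmul_eq_mul, coeff_add, hCn, coeff_C_mul, mul_comm (X ^ n),
      coeff_X_pow]
    split_ifs <;> simp [add_comm]

namespace IsDeltaBracket

variable {A : Type*} [CommRing A] [Algebra ℂ A] {δ : Derivation ℂ A A}
  {br : A[X] → A[X] → A[X]}

theorem coeff_X_left (hbr : IsDeltaBracket δ br) (p : A[X]) (i : ℕ) :
    (br X p).coeff i = δ (p.coeff i) := by
  have := (hbr.1.derivation X).coeff_polynomial_apply δ hbr.2.2 p i
  simpa [hbr.1.apply_self] using this

theorem C_left (hbr : IsDeltaBracket δ br) (b : A) (p : A[X]) :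
    br (C b) p = -(C (δ b) * derivative p) := by
  ext i
  have := (hbr.1.derivation (C b)).coeff_polynomial_apply 0 (by simpa using hbr.2.1 b) p i
  simp only [IsPoissonBracket.derivation_apply] at this
  rw [this, hbr.1.antisymm, hbr.2.2]
  simp [mul_comm]

theorem right_C (hbr : IsDeltaBracket δ br) (p : A[X]) (c : A) :
    br p (C c) = C (δ c) * derivative p := by
  rw [hbr.1.antisymm, hbr.C_left, neg_neg]

theorem isPoissonIdeal_map_C (hbr : IsDeltaBracket δ br) {J : Ideal A} (hJ : IsDeltaIdeal δ J) :
    IsPoissonIdeal br (J.map C) := by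
  refine hbr.1.isPoissonIdeal_span ?_
  rintro p _ ⟨c, hc, rfl⟩
  rw [hbr.right_C]
  exact Ideal.mul_mem_right _ _ (Ideal.mem_map_of_mem _ (hJ c hc))

theorem isDeltaIdeal_leadingCoeffNth (hbr : IsDeltaBracket δ br) {I : Ideal A[X]}
    (hI : IsPoissonIdeal br I) (n : ℕ) : IsDeltaIdeal δ (I.leadingCoeffNth n) := by
  intro a ha
  obtain ⟨p, ⟨hpdeg, hpI⟩, rfl⟩ := Submodule.mem_map.mp ha
  refine Submodule.mem_map.mpr ⟨br X p, ⟨?_, hI X p hpI⟩, by simp [hbr.coeff_X_left]⟩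
  rw [SetLike.mem_coe, mem_degreeLE, degree_le_iff_coeff_zero] at hpdeg ⊢
  intro m hm
  rw [hbr.coeff_X_left, hpdeg m hm, map_zero]

theorem one_mem_of_ne_zero [IsDomain A] (hbr : IsDeltaBracket δ br) (hδ : δ ≠ 0)
    (hA : ∀ J : Ideal A, IsDeltaIdeal δ J → J = ⊥ ∨ J = ⊤) {I : Ideal A[X]}
    (hI : IsPoissonIdeal br I) {p : A[X]} (hpI : p ∈ I) (hp0 : p ≠ 0) : (1 : A[X]) ∈ I := by
  have : CharZero A := charZero_of_injective_algebraMap (algebraMap ℂ A).injective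
  induction hn : p.natDegree using Nat.strong_induction_on generalizing p with
  | _ n ih =>
  obtain ⟨f, hfI, hfdeg, hfmonic⟩ : ∃ f ∈ I, f.degree ≤ n ∧ f.leadingCoeff = 1 := by
    have hlc : p.leadingCoeff ∈ I.leadingCoeffNth n :=
      (I.mem_leadingCoeffNth n _).mpr ⟨p, hpI, hn ▸ degree_le_natDegree, rfl⟩
    rcases hA _ (hbr.isDeltaIdeal_leadingCoeffNth hI n) with hbot | htop
    · rw [hbot, Ideal.mem_bot, leadingCoeff_eq_zero] at hlc
      exact absurd hlc hp0
    · exact (I.mem_leadingCoeffNth n 1).mp (htop ▸ Submodule.mem_top)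
  by_cases hf0 : f.natDegree = 0
  · rwa [← eq_one_of_monic_natDegree_zero hfmonic hf0]
  obtain ⟨b, hb⟩ : ∃ b, δ b ≠ 0 := by
    by_contra! h
    exact hδ (Derivation.ext h)
  refine ih (br (C b) f).natDegree ?_ (hI _ _ hfI) ?_ rfl
  · calc (br (C b) f).natDegree ≤ (derivative f).natDegree := by
          rw [hbr.C_left, natDegree_neg]; exact natDegree_C_mul_le _ _
      _ < f.natDegree := natDegree_derivative_lt hf0
      _ ≤ n := natDegree_le_iff_degree_le.mpr hfdeg
  · rw [hbr.C_left, neg_ne_zero]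
    exact mul_ne_zero (C_ne_zero.mpr hb) (derivative_ne_zero.mpr hf0)

end IsDeltaBracket

theorem stmt_7 {A : Type*} [CommRing A] [Algebra ℂ A] [IsDomain A]
    (δ : Derivation ℂ A A) (hδ : δ ≠ 0)
    (br : Polynomial A → Polynomial A → Polynomial A) (hbr : IsDeltaBracket δ br) :
    (∀ I : Ideal (Polynomial A), IsPoissonIdeal br I → I = ⊥ ∨ I = ⊤) ↔
      (∀ I : Ideal A, IsDeltaIdeal δ I → I = ⊥ ∨ I = ⊤) := by
  constructor
  · intro hB J hJ
    refine (hB _ (hbr.isPoissonIdeal_map_C hJ)).imp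
      (Ideal.map_eq_bot_iff_of_injective C_injective).mp fun htop => ?_
    have hone : (1 : A[X]) ∈ J.map C := htop ▸ Submodule.mem_top
    simpa [Ideal.eq_top_iff_one] using Ideal.mem_map_C_iff.mp hone 0
  · intro hA I hI
    refine or_iff_not_imp_left.mpr fun hI0 => ?_
    obtain ⟨p, hpI, hp0⟩ := Submodule.exists_mem_ne_zero_of_ne_bot hI0
    exact (Ideal.eq_top_iff_one _).mpr (hbr.one_mem_of_ne_zero hδ hA hI hpI hp0)
end

section
/- The Ore extension R = A[z; δ] is a simple ring if and only if A is δ-simple. -/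
/-!
Write `ψ p = eval₂ ι z p`, a bijection `A[X] → R`, and `D` for `δ` applied coefficientwise.
Then `ι a * ψ p = ψ (C a * p)`, `ψ p * z = ψ (p * X)` and `z * ψ p = ψ (X * p + D p)`.

If `R` is simple and `I` is a `δ`-ideal, the image under `ψ` of the polynomials with coefficients
in `I` is a two-sided ideal, so it is `0` or `R`, forcing `I = 0` or `I = A`.

Conversely, let `J ≠ 0` be a two-sided ideal of `R` and `n` the least degree of a nonzero
polynomial in `ψ⁻¹ J`, which is an ideal of `A[X]` stable under `D`. The leading coefficients
of its elements of degree `≤ n` form a nonzero `δ`-ideal, hence contain `1`: some monic `p` of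
degree `n` lies in `ψ⁻¹ J`. For every `a`, the commutator `ψ p * ι a - ι a * ψ p` lies in `J`
and has degree `< n`, so it is `0`; its coefficient of degree `n - 1` is `n • δ a`. As `δ ≠ 0`
and `A` is a `ℂ`-algebra, `n = 0`, so `p = 1` and `J = R`.
-/

open Polynomial

/-- `R` is an Ore extension `A[z;δ]`: `z·a − a·z = δ a` and every element of `R` is
uniquely a polynomial in `z` with coefficients in (the image of) `A`. -/
structure IsOreExtension {A R : Type*} [CommRing A] [Algebra ℂ A] [Ring R]
    (δ : Derivation ℂ A A) (ι : A →+* R) (z : R) : Prop where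
  comm : ∀ a : A, z * ι a - ι a * z = ι (δ a)
  repr : ∀ r : R, ∃! p : Polynomial A, r = p.sum fun n a => ι a * z ^ n

namespace Derivation

variable {k A : Type*} [CommRing k] [CommRing A] [Algebra k A] (δ : Derivation k A A)

noncomputable def mapCoeffsPoly : Derivation k A[X] A[X] :=
  PolynomialModule.equivPolynomialSelf.compDer δ.mapCoeffs

@[simp]
lemma coeff_mapCoeffsPoly (p : A[X]) (i : ℕ) : (δ.mapCoeffsPoly p).coeff i = δ (p.coeff i) :=
  rfl

@[simp]
lemma mapCoeffsPoly_monomial (n : ℕ) (a : A) :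
    δ.mapCoeffsPoly (monomial n a) = monomial n (δ a) := by
  ext i
  simp only [coeff_mapCoeffsPoly, coeff_monomial, apply_ite δ, map_zero]

lemma degree_mapCoeffsPoly_le (p : A[X]) : (δ.mapCoeffsPoly p).degree ≤ p.degree :=
  (degree_le_iff_coeff_zero _ _).2 fun m hm => by
    rw [coeff_mapCoeffsPoly, coeff_eq_zero_of_degree_lt hm, map_zero]

end Derivation

namespace Polynomial

section Noncomm

variable {A R : Type*} [Semiring A] [Semiring R] (ι : A →+* R) (z : R)

lemma eval₂_C_mul' (a : A) (p : A[X]) : eval₂ ι z (C a * p) = ι a * eval₂ ι z p := by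
  induction p using Polynomial.induction_on' with
  | add p q hp hq => rw [mul_add, eval₂_add, eval₂_add, hp, hq, mul_add]
  | monomial n b => rw [C_mul_monomial, eval₂_monomial, eval₂_monomial, map_mul, mul_assoc]

lemma eval₂_mul_X_pow' (p : A[X]) (n : ℕ) : eval₂ ι z (p * X ^ n) = eval₂ ι z p * z ^ n := by
  induction n with
  | zero => simp
  | succ n ih => rw [pow_succ, ← mul_assoc, eval₂_mul_X, ih, pow_succ, mul_assoc]

end Noncomm

variable {A R : Type*} [CommRing A] [Ring R] (ι : A →+* R) (z : R)

/-- An ideal although `eval₂ ι z` is not multiplicative: `J` is two-sided and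
`eval₂ ι z (C a * p * X ^ n) = ι a * eval₂ ι z p * z ^ n`. -/
def eval₂Comap (J : TwoSidedIdeal R) : Ideal A[X] where
  carrier := {p | eval₂ ι z p ∈ J}
  zero_mem' := by simp
  add_mem' {p q} hp hq := by
    rw [Set.mem_ofPred_eq, eval₂_add]
    exact J.add_mem hp hq
  smul_mem' q p hp := by
    induction q using Polynomial.induction_on' with
    | add q r hq hr =>
      rw [smul_eq_mul, add_mul, Set.mem_ofPred_eq, eval₂_add]
      exact J.add_mem hq hr
    | monomial n b =>
      rw [smul_eq_mul, ← C_mul_X_pow_eq_monomial, mul_assoc, mul_comm _ p, Set.mem_ofPred_eq,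
        eval₂_C_mul', eval₂_mul_X_pow']
      exact J.mul_mem_left _ _ (J.mul_mem_right _ _ hp)

@[simp]
lemma mem_eval₂Comap {J : TwoSidedIdeal R} {p : A[X]} : p ∈ eval₂Comap ι z J ↔ eval₂ ι z p ∈ J :=
  Iff.rfl

noncomputable def eval₂Image (K : Ideal A[X]) : AddSubgroup R :=
  K.toAddSubgroup.map (eval₂AddMonoidHom ι z)

lemma mem_eval₂Image {K : Ideal A[X]} {x : R} :
    x ∈ eval₂Image ι z K ↔ ∃ p ∈ K, eval₂ ι z p = x :=
  AddSubgroup.mem_map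

end Polynomial

lemma Ideal.isDeltaIdeal_leadingCoeffNth {A : Type*} [CommRing A] [Algebra ℂ A]
    {δ : Derivation ℂ A A} {K : Ideal A[X]} (hK : ∀ p ∈ K, δ.mapCoeffsPoly p ∈ K) (n : ℕ) :
    IsDeltaIdeal δ (K.leadingCoeffNth n) := by
  rintro _ ⟨p, ⟨hdeg, hpK⟩, rfl⟩
  exact ⟨δ.mapCoeffsPoly p,
    ⟨mem_degreeLE.2 ((δ.degree_mapCoeffsPoly_le p).trans (mem_degreeLE.1 hdeg)), hK p hpK⟩, rfl⟩

namespace IsOreExtension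

variable {A R : Type*} [CommRing A] [Algebra ℂ A] [Ring R]
  {δ : Derivation ℂ A A} {ι : A →+* R} {z : R} (hR : IsOreExtension δ ι z)
include hR

lemma eval₂_bijective : Function.Bijective (eval₂ ι z) := by
  refine (Function.bijective_iff_existsUnique _).2 fun r => ?_
  simpa only [eval₂_eq_sum, eq_comm] using hR.repr r

lemma mul_eval₂ (p : A[X]) : z * eval₂ ι z p = eval₂ ι z (X * p + δ.mapCoeffsPoly p) := by
  induction p using Polynomial.induction_on' with
  | add p q hp hq =>
    rw [eval₂_add, mul_add, hp, hq, ← eval₂_add, map_add, mul_add, add_add_add_comm]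
  | monomial n a =>
    have hza : z * ι a = ι a * z + ι (δ a) := by rw [← hR.comm a, add_sub_cancel]
    rw [eval₂_add, eval₂_X_mul, δ.mapCoeffsPoly_monomial, eval₂_monomial, eval₂_monomial,
      ← mul_assoc, hza, add_mul, mul_assoc, mul_assoc, ← pow_succ', pow_succ]

lemma mul_mem_of_generators_mul_mem {S : AddSubmonoid R} (hι : ∀ a, ∀ y ∈ S, ι a * y ∈ S)
    (hz : ∀ y ∈ S, z * y ∈ S) (x : R) {y : R} (hy : y ∈ S) : x * y ∈ S := by
  obtain ⟨p, rfl⟩ := hR.eval₂_bijective.2 x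
  have hpow (k : ℕ) : z ^ k * y ∈ S := by
    induction k with
    | zero => simpa using hy
    | succ k ih => rw [pow_succ', mul_assoc]; exact hz _ ih
  rw [eval₂_eq_sum_range, Finset.sum_mul]
  exact S.sum_mem fun k _ => by rw [mul_assoc]; exact hι _ _ (hpow k)

section extendIdeal

variable {I : Ideal A}

lemma ι_mul_mem_eval₂Image {i : A} (hi : i ∈ I) (x : R) :
    ι i * x ∈ eval₂Image ι z (I.map C) := by
  obtain ⟨p, rfl⟩ := hR.eval₂_bijective.2 x
  exact (mem_eval₂Image ι z).2
    ⟨C i * p, Ideal.mul_mem_right _ _ (Ideal.mem_map_of_mem _ hi), eval₂_C_mul' ι z i p⟩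

lemma mul_mem_eval₂Image_right {x : R} (hx : x ∈ eval₂Image ι z (I.map C)) (y : R) :
    x * y ∈ eval₂Image ι z (I.map C) := by
  obtain ⟨p, hp, rfl⟩ := (mem_eval₂Image ι z).1 hx
  rw [eval₂_eq_sum_range, Finset.sum_mul]
  exact AddSubgroup.sum_mem _ fun k _ => by
    rw [mul_assoc]; exact hR.ι_mul_mem_eval₂Image (Ideal.mem_map_C_iff.1 hp k) _

lemma mul_mem_eval₂Image_left (hI : IsDeltaIdeal δ I) (x : R) {y : R}
    (hy : y ∈ eval₂Image ι z (I.map C)) : x * y ∈ eval₂Image ι z (I.map C) := by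
  refine hR.mul_mem_of_generators_mul_mem
    (S := (eval₂Image ι z (I.map C)).toAddSubmonoid) ?_ ?_ x hy
  · intro a y hy
    obtain ⟨p, hp, rfl⟩ := (mem_eval₂Image ι z).1 hy
    exact (mem_eval₂Image ι z).2 ⟨C a * p, Ideal.mul_mem_left _ _ hp, eval₂_C_mul' ι z a p⟩
  · intro y hy
    obtain ⟨p, hp, rfl⟩ := (mem_eval₂Image ι z).1 hy
    have hDp : δ.mapCoeffsPoly p ∈ I.map C :=
      Ideal.mem_map_C_iff.2 fun n => hI _ (Ideal.mem_map_C_iff.1 hp n)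
    exact (mem_eval₂Image ι z).2
      ⟨_, Ideal.add_mem _ (Ideal.mul_mem_left _ _ hp) hDp, (hR.mul_eval₂ p).symm⟩

noncomputable def extendIdeal (hI : IsDeltaIdeal δ I) : TwoSidedIdeal R :=
  .mk' (eval₂Image ι z (I.map C)) (AddSubgroup.zero_mem _) (AddSubgroup.add_mem _)
    (AddSubgroup.neg_mem _) (hR.mul_mem_eval₂Image_left hI _) (hR.mul_mem_eval₂Image_right · _)

lemma mem_extendIdeal (hI : IsDeltaIdeal δ I) {x : R} :
    x ∈ hR.extendIdeal hI ↔ ∃ p ∈ I.map C, eval₂ ι z p = x :=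
  (TwoSidedIdeal.mem_mk' _ _ _ _ _ _ x).trans (mem_eval₂Image ι z)

end extendIdeal

lemma isDeltaSimple_of_isSimpleRing (hs : IsSimpleRing R) (I : Ideal A) (hI : IsDeltaIdeal δ I) :
    I = ⊥ ∨ I = ⊤ := by
  rcases hs.simple.eq_bot_or_eq_top (hR.extendIdeal hI) with h | h
  · refine Or.inl ((Submodule.eq_bot_iff I).2 fun a ha => ?_)
    have hιa : ι a ∈ hR.extendIdeal hI :=
      (hR.mem_extendIdeal hI).2 ⟨C a, Ideal.mem_map_of_mem _ ha, eval₂_C ι z⟩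
    rw [h, TwoSidedIdeal.mem_bot, ← eval₂_C ι z, ← eval₂_zero ι z] at hιa
    exact C_eq_zero.1 (hR.eval₂_bijective.1 hιa)
  · obtain ⟨p, hp, hp1⟩ := (hR.mem_extendIdeal hI).1 (h ▸ TwoSidedIdeal.mem_top (x := (1 : R)))
    rw [← eval₂_one ι z] at hp1
    have := Ideal.mem_map_C_iff.1 hp 0
    rw [hR.eval₂_bijective.1 hp1, coeff_one_zero] at this
    exact Or.inr ((Ideal.eq_top_iff_one I).2 this)

lemma pow_mul_sub_mul_pow (k : ℕ) (a : A) :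
    ∃ q : A[X], z ^ k * ι a - ι a * z ^ k = eval₂ ι z q ∧ q.degree < k ∧
      q.coeff (k - 1) = k • δ a := by
  -- `[z ^ (k + 1), ι a] = z * [z ^ k, ι a] + ι (δ a) * z ^ k`
  induction k with
  | zero => exact ⟨0, by simp, by simp, by simp⟩
  | succ k ih =>
    obtain ⟨q, hq, hdeg, hcoeff⟩ := ih
    have hq0 : ∀ m ≥ k, q.coeff m = 0 := (degree_lt_iff_coeff_zero _ _).1 hdeg
    refine ⟨X * q + δ.mapCoeffsPoly q + C (δ a) * X ^ k, ?_, ?_, ?_⟩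
    · rw [eval₂_add, ← hR.mul_eval₂, ← hq, eval₂_C_mul', eval₂_X_pow, ← hR.comm]
      simp only [mul_sub, sub_mul, pow_succ', mul_assoc]
      abel
    · refine (degree_lt_iff_coeff_zero _ _).2 fun m hm => ?_
      obtain ⟨m, rfl⟩ : ∃ m', m = m' + 1 := ⟨m - 1, by omega⟩
      simp only [coeff_add, coeff_X_mul, Derivation.coeff_mapCoeffsPoly, coeff_C_mul_X_pow,
        hq0 m (by omega), hq0 (m + 1) (by omega), map_zero, if_neg (show m + 1 ≠ k by omega),
        add_zero]
    · cases k with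
      | zero => simp [hq0 0 le_rfl]
      | succ k =>
        simp only [Nat.add_sub_cancel] at hcoeff ⊢
        rw [coeff_add, coeff_add, coeff_X_mul, hcoeff, Derivation.coeff_mapCoeffsPoly,
          hq0 _ le_rfl, map_zero, add_zero, coeff_C_mul_X_pow, if_pos rfl, ← succ_nsmul]

lemma eval₂_mul_sub_mul_eval₂ {n : ℕ} {p : A[X]} (hp : p.natDegree ≤ n) (a : A) :
    ∃ F : A[X], eval₂ ι z p * ι a - ι a * eval₂ ι z p = eval₂ ι z F ∧ F.degree < n ∧
      F.coeff (n - 1) = p.coeff n * n • δ a := by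
  choose q hq hdeg hcoeff using fun k => hR.pow_mul_sub_mul_pow k a
  refine ⟨∑ k ∈ Finset.range (n + 1), C (p.coeff k) * q k, ?_, ?_, ?_⟩
  · rw [eval₂_eq_sum_range' ι (Nat.lt_succ_of_le hp), eval₂_finsetSum, Finset.sum_mul,
      Finset.mul_sum, ← Finset.sum_sub_distrib]
    refine Finset.sum_congr rfl fun k _ => ?_
    rw [eval₂_C_mul', ← hq, mul_sub, ← mul_assoc (ι a), ← map_mul, mul_comm a, map_mul,
      mul_assoc, mul_assoc]
  · rw [← mem_degreeLT]
    refine Submodule.sum_mem _ fun k hk => ?_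
    rw [← smul_eq_C_mul]
    exact Submodule.smul_mem _ _ (mem_degreeLT.2 ((hdeg k).trans_le
      (Nat.cast_le.2 (Nat.lt_succ_iff.1 (Finset.mem_range.1 hk)))))
  · rw [finsetSum_coeff, Finset.sum_range_succ, Finset.sum_eq_zero, zero_add, coeff_C_mul,
      hcoeff]
    intro k hk
    rw [coeff_C_mul, coeff_eq_zero_of_degree_lt ((hdeg k).trans_le
      (Nat.cast_le.2 (by have := Finset.mem_range.1 hk; omega))), mul_zero]

lemma mapCoeffsPoly_mem_eval₂Comap {J : TwoSidedIdeal R} {p : A[X]}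
    (hp : p ∈ eval₂Comap ι z J) : δ.mapCoeffsPoly p ∈ eval₂Comap ι z J := by
  have hzp : X * p + δ.mapCoeffsPoly p ∈ eval₂Comap ι z J := by
    rw [mem_eval₂Comap, ← hR.mul_eval₂]
    exact J.mul_mem_left _ _ hp
  simpa using sub_mem hzp (Ideal.mul_mem_left _ X hp)

lemma natDegree_eq_zero_of_monic_mem (hδ : δ ≠ 0) {J : TwoSidedIdeal R} {p : A[X]}
    (hp : p ∈ eval₂Comap ι z J) (hmonic : p.Monic)
    (hmin : ∀ q ∈ eval₂Comap ι z J, q ≠ 0 → p.natDegree ≤ q.natDegree) : p.natDegree = 0 := by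
  obtain ⟨a, ha⟩ : ∃ a, δ a ≠ 0 := by
    by_contra! h
    exact hδ (Derivation.ext h)
  obtain ⟨F, hF, hdeg, hcoeff⟩ := hR.eval₂_mul_sub_mul_eval₂ le_rfl a
  have hFJ : F ∈ eval₂Comap ι z J := by
    rw [mem_eval₂Comap, ← hF]
    exact J.sub_mem (J.mul_mem_right _ _ hp) (J.mul_mem_left _ _ hp)
  have hF0 : F = 0 := by
    by_contra hne
    exact (hmin F hFJ hne).not_gt ((natDegree_lt_iff_degree_lt hne).2 hdeg)
  rw [hF0, coeff_zero, hmonic.coeff_natDegree, one_mul, eq_comm,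
    ← Nat.cast_smul_eq_nsmul ℂ, smul_eq_zero] at hcoeff
  simpa [ha] using hcoeff

lemma exists_monic_mem_of_isDeltaSimple (h : ∀ I : Ideal A, IsDeltaIdeal δ I → I = ⊥ ∨ I = ⊤)
    {J : TwoSidedIdeal R} (hJ : J ≠ ⊥) :
    ∃ p ∈ eval₂Comap ι z J, p.Monic ∧
      ∀ q ∈ eval₂Comap ι z J, q ≠ 0 → p.natDegree ≤ q.natDegree := by
  classical
  set K := eval₂Comap ι z J
  have hK : ∃ n, ∃ p ∈ K, p ≠ 0 ∧ p.natDegree = n := by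
    obtain ⟨x, hx, hx0⟩ : ∃ x ∈ J, x ≠ 0 := by
      by_contra! hJ0
      exact hJ (TwoSidedIdeal.ext fun x => ⟨hJ0 x, fun hx => hx ▸ J.zero_mem⟩)
    obtain ⟨p, rfl⟩ := hR.eval₂_bijective.2 x
    exact ⟨_, p, hx, by rintro rfl; simp at hx0, rfl⟩
  obtain ⟨p, hpK, hp0, hpn⟩ := Nat.find_spec hK
  have : Nontrivial A := nontrivial_iff.1 ⟨p, 0, hp0⟩
  have hmin : ∀ q ∈ K, q ≠ 0 → Nat.find hK ≤ q.natDegree :=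
    fun q hq hq0 => Nat.find_min' hK ⟨q, hq, hq0, rfl⟩
  have hlead : K.leadingCoeffNth (Nat.find hK) = ⊤ := by
    refine (h _ (Ideal.isDeltaIdeal_leadingCoeffNth (fun _ => hR.mapCoeffsPoly_mem_eval₂Comap)
      _)).resolve_left fun hbot => hp0 (leadingCoeff_eq_zero.1 ?_)
    rw [← Ideal.mem_bot, ← hbot, Ideal.mem_leadingCoeffNth]
    exact ⟨p, hpK, hpn ▸ degree_le_natDegree, rfl⟩
  obtain ⟨q, hqK, hqdeg, hq1⟩ := (K.mem_leadingCoeffNth _ 1).1 (hlead ▸ Submodule.mem_top)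
  refine ⟨q, hqK, hq1, fun r hr hr0 => ?_⟩
  rw [le_antisymm (natDegree_le_of_degree_le hqdeg) (hmin q hqK (Monic.ne_zero hq1))]
  exact hmin r hr hr0

lemma isSimpleRing_of_isDeltaSimple (hδ : δ ≠ 0)
    (h : ∀ I : Ideal A, IsDeltaIdeal δ I → I = ⊥ ∨ I = ⊤) : IsSimpleRing R := by
  have : Nontrivial A := by
    by_contra hA
    rw [not_nontrivial_iff_subsingleton] at hA
    exact hδ (Derivation.ext fun a => Subsingleton.elim _ _)
  have : Nontrivial R := ⟨0, 1, fun h01 => zero_ne_one (α := A[X])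
    (hR.eval₂_bijective.1 (by rwa [eval₂_zero, eval₂_one]))⟩
  refine IsSimpleRing.of_eq_bot_or_eq_top fun J => or_iff_not_imp_left.2 fun hJ => ?_
  obtain ⟨p, hpJ, hmonic, hmin⟩ := hR.exists_monic_mem_of_isDeltaSimple h hJ
  rw [(Monic.natDegree_eq_zero hmonic).1 (hR.natDegree_eq_zero_of_monic_mem hδ hpJ hmonic hmin),
    mem_eval₂Comap, eval₂_one] at hpJ
  exact (TwoSidedIdeal.one_mem_iff J).1 hpJ

end IsOreExtension

theorem stmt_8_general {A R : Type*} [CommRing A] [Algebra ℂ A] [Ring R]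
    (δ : Derivation ℂ A A) (hδ : δ ≠ 0) (ι : A →+* R) (z : R)
    (hR : IsOreExtension δ ι z) :
    IsSimpleRing R ↔ (∀ I : Ideal A, IsDeltaIdeal δ I → I = ⊥ ∨ I = ⊤) :=
  ⟨fun hs => hR.isDeltaSimple_of_isSimpleRing hs, hR.isSimpleRing_of_isDeltaSimple hδ⟩

theorem stmt_8 {A R : Type*} [CommRing A] [Algebra ℂ A] [IsDomain A] [Ring R]
    (δ : Derivation ℂ A A) (hδ : δ ≠ 0) (ι : A →+* R) (z : R)
    (hR : IsOreExtension δ ι z) :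
    IsSimpleRing R ↔ (∀ I : Ideal A, IsDeltaIdeal δ I → I = ⊥ ∨ I = ⊤) :=
  stmt_8_general δ hδ ι z hR
end

section
/- If J = δ(A)A then JR is a two-sided ideal of R = A[z;δ], the quotient R/JR is commutative, and JR is contained in every ideal I of R such that R/I is commutative. -/
open Polynomial

/-!
`R = A[z;δ]` is generated as a ring by `ι A` and `z`, so both the left ideal property of the
additive group `JR` and the commutativity of `R/JR` reduce to checks on these generators.
Since `z ι(j) = ι(j) z + ι(δ j)` and `δ j ∈ J`, left multiplication by `z` preserves `JR`;
the only non-trivial commutator of generators is `z ι(a) - ι(a) z = ι(δ a) ∈ JR`, and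
conversely every ideal with commutative quotient contains these commutators, hence `ι J`.
-/

section SubringClosureEqTop

variable {R : Type*} [Ring R] {s : Set R}

theorem AddSubgroup.mul_mem_of_subring_closure_eq_top (hs : Subring.closure s = ⊤)
    {C : AddSubgroup R} (hC : ∀ x ∈ s, ∀ c ∈ C, x * c ∈ C) (r : R) {c : R} (hc : c ∈ C) :
    r * c ∈ C := by
  have hr : r ∈ Subring.closure s := hs ▸ Subring.mem_top r
  induction hr using Subring.closure_induction generalizing c with
  | mem x hx => exact hC x hx c hc
  | zero => simp
  | one => simpa using hc
  | add x y _ _ hx hy => rw [add_mul]; exact C.add_mem (hx hc) (hy hc)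
  | neg x _ hx => rw [neg_mul]; exact C.neg_mem (hx hc)
  | mul x y _ _ hx hy => rw [mul_assoc]; exact hx (hy hc)

theorem TwoSidedIdeal.mul_sub_mul_mem_of_subring_closure_eq_top (hs : Subring.closure s = ⊤)
    (I : TwoSidedIdeal R) (h : ∀ x ∈ s, ∀ y ∈ s, x * y - y * x ∈ I) (x y : R) :
    x * y - y * x ∈ I := by
  have extend : ∀ y, (∀ x ∈ s, x * y - y * x ∈ I) → ∀ x, x * y - y * x ∈ I := by
    intro y hy x
    have hx : x ∈ Subring.closure s := hs ▸ Subring.mem_top x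
    induction hx using Subring.closure_induction with
    | mem x hx => exact hy x hx
    | zero => simp
    | one => simp
    | add x x' _ _ hx hx' =>
      rw [show (x + x') * y - y * (x + x') = (x * y - y * x) + (x' * y - y * x') by noncomm_ring]
      exact I.add_mem hx hx'
    | neg x _ hx =>
      rw [show -x * y - y * -x = -(x * y - y * x) by noncomm_ring]
      exact I.neg_mem hx
    | mul x x' _ _ hx hx' =>
      rw [show x * x' * y - y * (x * x') = x * (x' * y - y * x') + (x * y - y * x) * x' by
        noncomm_ring]
      exact I.add_mem (I.mul_mem_left _ _ hx') (I.mul_mem_right _ _ hx)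
  refine extend y (fun x' hx' => ?_) x
  rw [← neg_sub]
  exact I.neg_mem (extend x' (fun x hx => h x hx x' hx') y)

end SubringClosureEqTop

theorem isDeltaIdeal_span_range {A : Type*} [CommRing A] [Algebra ℂ A]
    (δ : Derivation ℂ A A) : IsDeltaIdeal δ (Ideal.span (Set.range δ)) :=
  fun a _ => Ideal.subset_span ⟨a, rfl⟩

namespace IsOreExtension

variable {A R : Type*} [CommRing A] [Algebra ℂ A] [Ring R]
  {δ : Derivation ℂ A A} {ι : A →+* R} {z : R}

theorem subring_closure_eq_top (hR : IsOreExtension δ ι z) :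
    Subring.closure (insert z (Set.range ι)) = ⊤ := by
  refine eq_top_iff.2 fun r _ => ?_
  obtain ⟨p, hp, -⟩ := hR.repr r
  rw [hp, Polynomial.sum_def]
  refine Subring.sum_mem _ fun n _ => Subring.mul_mem _ ?_ (Subring.pow_mem _ ?_ n)
  · exact Subring.subset_closure (Set.mem_insert_of_mem _ ⟨_, rfl⟩)
  · exact Subring.subset_closure (Set.mem_insert _ _)

theorem mul_mem_closure_of_isDeltaIdeal (hR : IsOreExtension δ ι z) {I : Ideal A}
    (hI : IsDeltaIdeal δ I) (x : R) {c : R}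
    (hc : c ∈ AddSubgroup.closure {y | ∃ j ∈ I, ∃ r : R, y = ι j * r}) :
    x * c ∈ AddSubgroup.closure {y | ∃ j ∈ I, ∃ r : R, y = ι j * r} := by
  set C := AddSubgroup.closure {y | ∃ j ∈ I, ∃ r : R, y = ι j * r}
  have gen : ∀ j ∈ I, ∀ r, ι j * r ∈ C := fun j hj r => AddSubgroup.subset_closure ⟨j, hj, r, rfl⟩
  refine AddSubgroup.mul_mem_of_subring_closure_eq_top hR.subring_closure_eq_top
    (fun g hg c hc => ?_) x hc
  refine (AddSubgroup.closure_le (C.comap (AddMonoidHom.mulLeft g))).2 ?_ hc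
  rintro _ ⟨j, hj, r, rfl⟩
  change g * (ι j * r) ∈ C
  rcases hg with rfl | ⟨a, rfl⟩
  · rw [← mul_assoc, sub_eq_iff_eq_add.1 (hR.comm j), add_mul, mul_assoc]
    exact C.add_mem (gen _ (hI j hj) r) (gen j hj _)
  · rw [← mul_assoc, ← map_mul]
    exact gen _ (I.mul_mem_left a hj) r

theorem coe_span_image_eq_closure (hR : IsOreExtension δ ι z) {I : Ideal A}
    (hI : IsDeltaIdeal δ I) :
    (TwoSidedIdeal.span (ι '' I) : Set R) =
      AddSubgroup.closure {y | ∃ j ∈ I, ∃ r : R, y = ι j * r} := by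
  set C := AddSubgroup.closure {y | ∃ j ∈ I, ∃ r : R, y = ι j * r}
  have gen : ∀ j ∈ I, ∀ r, ι j * r ∈ C := fun j hj r => AddSubgroup.subset_closure ⟨j, hj, r, rfl⟩
  have mul_mem_right : ∀ {c} r, c ∈ C → c * r ∈ C := fun r hc => by
    refine (AddSubgroup.closure_le (C.comap (AddMonoidHom.mulRight r))).2 ?_ hc
    rintro _ ⟨j, hj, r', rfl⟩
    simpa [mul_assoc] using gen j hj (r' * r)
  let L : TwoSidedIdeal R := .mk' C C.zero_mem C.add_mem C.neg_mem
    (hR.mul_mem_closure_of_isDeltaIdeal hI _) (mul_mem_right _)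
  refine subset_antisymm (fun x hx => ?_) (fun x hx => ?_)
  · have hle : TwoSidedIdeal.span (ι '' I) ≤ L := TwoSidedIdeal.span_le.2 <| by
      rintro _ ⟨j, hj, rfl⟩
      simpa [L] using gen j hj 1
    simpa [L] using hle hx
  · induction hx using AddSubgroup.closure_induction with
    | mem x hx =>
      obtain ⟨j, hj, r, rfl⟩ := hx
      exact TwoSidedIdeal.mul_mem_right _ _ _ (TwoSidedIdeal.subset_span ⟨j, hj, rfl⟩)
    | zero => exact TwoSidedIdeal.zero_mem _
    | add x y _ _ hx hy => exact TwoSidedIdeal.add_mem _ hx hy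
    | neg x _ hx => exact TwoSidedIdeal.neg_mem _ hx

theorem mul_sub_mul_mem_span (hR : IsOreExtension δ ι z) (x y : R) :
    x * y - y * x ∈ TwoSidedIdeal.span (ι '' Ideal.span (Set.range δ)) := by
  set K := TwoSidedIdeal.span (ι '' Ideal.span (Set.range δ))
  have z_comm : ∀ a, z * ι a - ι a * z ∈ K := fun a => by
    rw [hR.comm a]
    exact TwoSidedIdeal.subset_span ⟨δ a, Ideal.subset_span ⟨a, rfl⟩, rfl⟩
  refine K.mul_sub_mul_mem_of_subring_closure_eq_top hR.subring_closure_eq_top ?_ x y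
  rintro x (rfl | ⟨a, rfl⟩) y (rfl | ⟨b, rfl⟩)
  · simp
  · exact z_comm b
  · rw [← neg_sub]
    exact K.neg_mem (z_comm a)
  · rw [← map_mul, ← map_mul, mul_comm, sub_self]
    exact K.zero_mem

theorem span_le_of_mul_sub_mul_mem (hR : IsOreExtension δ ι z) {I : TwoSidedIdeal R}
    (hI : ∀ x y : R, x * y - y * x ∈ I) :
    TwoSidedIdeal.span (ι '' Ideal.span (Set.range δ)) ≤ I := by
  refine TwoSidedIdeal.span_le.2 (Set.image_subset_iff.2 ?_)
  change Ideal.span (Set.range δ) ≤ Ideal.comap ι I.asIdeal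
  refine Ideal.span_le.2 ?_
  rintro _ ⟨a, rfl⟩
  simpa [TwoSidedIdeal.mem_asIdeal, ← hR.comm a] using hI z (ι a)

end IsOreExtension

theorem stmt_10_general {A R : Type*} [CommRing A] [Algebra ℂ A] [Ring R]
    (δ : Derivation ℂ A A) (ι : A →+* R) (z : R)
    (hR : IsOreExtension δ ι z)
    (J : Ideal A) (hJ : J = Ideal.span (Set.range (⇑δ)))
    (K : TwoSidedIdeal R) (hK : K = TwoSidedIdeal.span (ι '' (J : Set A))) :
    (K : Set R) = (AddSubgroup.closure {y : R | ∃ j ∈ J, ∃ r : R, y = ι j * r} : Set R) ∧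
      (∀ x y : R, x * y - y * x ∈ K) ∧
      (∀ I : TwoSidedIdeal R, (∀ x y : R, x * y - y * x ∈ I) → K ≤ I) := by
  subst hJ hK
  exact ⟨hR.coe_span_image_eq_closure (isDeltaIdeal_span_range δ), hR.mul_sub_mul_mem_span,
    fun _ hI => hR.span_le_of_mul_sub_mul_mem hI⟩

theorem stmt_10 {A R : Type*} [CommRing A] [Algebra ℂ A] [IsDomain A] [Ring R]
    (δ : Derivation ℂ A A) (hδ : δ ≠ 0) (ι : A →+* R) (z : R)
    (hR : IsOreExtension δ ι z)
    (J : Ideal A) (hJ : J = Ideal.span (Set.range (⇑δ)))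
    (K : TwoSidedIdeal R) (hK : K = TwoSidedIdeal.span (ι '' (J : Set A))) :
    (K : Set R) = (AddSubgroup.closure {y : R | ∃ j ∈ J, ∃ r : R, y = ι j * r} : Set R) ∧
      (∀ x y : R, x * y - y * x ∈ K) ∧
      (∀ I : TwoSidedIdeal R, (∀ x y : R, x * y - y * x ∈ I) → K ≤ I) :=
  stmt_10_general δ ι z hR J hJ K hK
end

section
/- Let C be a commutative domain, δ a derivation of C[t] with δ(C) ⊆ C, C being δ|_C-simple, and δ(t) = at + b with a, b ∈ C. If there is no r ∈ C with δ(r) = ar + b, then C[t] is δ-simple. -/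
/-!
Let `I ≠ 0` be a `δ`-stable ideal of `C[t]` and `n` the least degree of a nonzero element of `I`.
Since `δ (∑ cᵢ tⁱ)` has `n`-th coefficient `δ c_n + n a c_n + (n + 1) b c_{n+1}`, the map
`p ↦ δ p - n a p` preserves degree `≤ n` and acts as `δ` on the `n`-th coefficient.
Hence the ideal of `n`-th coefficients of elements of `I` of degree `≤ n` is `δ`-stable and
nonzero, so it is `C`, and `I` contains some `p = tⁿ + s tⁿ⁻¹ + ⋯`. If `n = 0` then `1 ∈ I`.
Otherwise `δ p - n a p ∈ I` has degree `< n`, so it vanishes, and its coefficient of `tⁿ⁻¹` gives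
`δ s = a s - n b`. As `n C` is a nonzero `δ`-stable ideal, `n` is a unit, and `r = -s / n` solves
`δ r = a r + b`.
-/

open Polynomial

theorem Ideal.mem_leadingCoeffNth_iff_coeff {R : Type*} [CommRing R] (I : Ideal R[X]) (n : ℕ)
    (x : R) : x ∈ I.leadingCoeffNth n ↔ ∃ p ∈ I, p.natDegree ≤ n ∧ p.coeff n = x := by
  simp only [leadingCoeffNth, degreeLE, Submodule.mem_map, lcoeff_apply, Submodule.mem_inf,
    mem_degreeLE, ← natDegree_le_iff_degree_le]
  exact ⟨fun ⟨p, ⟨hpn, hpI⟩, hpx⟩ => ⟨p, hpI, hpn, hpx⟩,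
    fun ⟨p, hpI, hpn, hpx⟩ => ⟨p, ⟨hpn, hpI⟩, hpx⟩⟩

theorem Ideal.exists_mem_ne_zero_forall_natDegree_le {R : Type*} [CommRing R] {I : Ideal R[X]}
    (hI : I ≠ ⊥) : ∃ p ∈ I, p ≠ 0 ∧ ∀ q ∈ I, q ≠ 0 → p.natDegree ≤ q.natDegree := by
  obtain ⟨p, hpI, hp0⟩ := Submodule.exists_mem_ne_zero_of_ne_bot hI
  let S : Set R[X] := {q | q ∈ I ∧ q ≠ 0}
  have hS : S.Nonempty := ⟨p, hpI, hp0⟩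
  obtain ⟨hminI, hmin0⟩ : Function.argminOn natDegree S hS ∈ S := Function.argminOn_mem _ _ hS
  exact ⟨_, hminI, hmin0, fun q hqI hq0 => Function.argminOn_le natDegree S ⟨hqI, hq0⟩⟩

namespace Derivation

variable {A : Type*} [CommRing A]

def restrictPolynomialC (D : Derivation ℤ A[X] A[X]) (d : A → A)
    (hd : ∀ c, D (C c) = C (d c)) : Derivation ℤ A A where
  toFun := d
  map_add' x y := C_injective <| by simp only [← hd, map_add]
  map_smul' z x := C_injective <| by simp [← hd]
  map_one_eq_zero' := C_injective <| by simp [← hd]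
  leibniz' x y := C_injective <| by simp [← hd]

theorem isUnit_natCast_of_forall_stable_ideal [CharZero A] (d : Derivation ℤ A A)
    (hsimple : ∀ I : Ideal A, (∀ c ∈ I, d c ∈ I) → I = ⊥ ∨ I = ⊤) {n : ℕ} (hn : n ≠ 0) :
    IsUnit (n : A) := by
  have hstable : ∀ c ∈ Ideal.span {(n : A)}, d c ∈ Ideal.span {(n : A)} := by
    intro c hc
    obtain ⟨x, rfl⟩ := Ideal.mem_span_singleton'.1 hc
    rw [leibniz, map_natCast, smul_zero, zero_add, smul_eq_mul]
    exact Ideal.mul_mem_right _ _ (Ideal.mem_span_singleton_self _)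
  rcases hsimple _ hstable with h | h
  · exact absurd (Ideal.span_singleton_eq_bot.1 h) (Nat.cast_ne_zero.2 hn)
  · exact Ideal.span_singleton_eq_top.1 h

theorem exists_apply_eq_mul_add_of_isUnit (d : Derivation ℤ A A) {u s a b : A} (hu : IsUnit u)
    (hdu : d u = 0) (hs : d s = a * s - u * b) : ∃ r, d r = a * r + b := by
  have hdv : d ↑hu.unit⁻¹ = 0 := by
    rw [leibniz_of_mul_eq_one d hu.val_inv_mul, hdu, smul_zero]
  refine ⟨-(↑hu.unit⁻¹ * s), ?_⟩
  rw [map_neg, leibniz, hdv, hs, smul_zero, add_zero, smul_eq_mul]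
  linear_combination b * hu.val_inv_mul

variable (D : Derivation ℤ A[X] A[X]) (d : Derivation ℤ A A) (hC : ∀ c, D (C c) = C (d c))
  {a b : A} (hX : D X = C a * X + C b)
include hC hX

theorem coeff_apply_of_apply_X (p : A[X]) (k : ℕ) :
    (D p).coeff k = d (p.coeff k) + k * a * p.coeff k + (k + 1) * b * p.coeff (k + 1) := by
  induction p using Polynomial.induction_on' with
  | add p q hp hq => simp only [map_add, coeff_add, hp, hq]; ring
  | monomial m c =>
    rw [← C_mul_X_pow_eq_monomial, leibniz, leibniz_pow, hX, hC]
    rcases m with _ | m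
    · rcases k with _ | k <;> simp [coeff_C]
    · simp only [add_tsub_cancel_right, smul_eq_mul, mul_add, X_pow_mul_C, smul_add, nsmul_eq_mul,
        Nat.cast_add, Nat.cast_one, add_mul, one_mul, coeff_add, coeff_C_mul, coeff_natCast_mul,
        coeff_X_pow_mul', coeff_X, mul_ite, mul_one, mul_zero, coeff_X_pow,
        Nat.add_right_cancel_iff]
      split_ifs <;> first | omega | (try subst_vars); (try simp only [map_zero]); push_cast; ring

theorem natDegree_apply_le_of_apply_X {p : A[X]} {n : ℕ} (hp : p.natDegree ≤ n) :
    (D p).natDegree ≤ n := by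
  refine natDegree_le_iff_coeff_eq_zero.2 fun k hk => ?_
  rw [coeff_apply_of_apply_X D d hC hX, coeff_eq_zero_of_natDegree_lt (hp.trans_lt hk),
    coeff_eq_zero_of_natDegree_lt (hp.trans_lt (hk.trans k.lt_succ_self))]
  simp

theorem natDegree_apply_sub_C_mul_le {p : A[X]} {n : ℕ} (hp : p.natDegree ≤ n) :
    (D p - C (n * a) * p).natDegree ≤ n :=
  (natDegree_sub_le _ _).trans <|
    max_le (natDegree_apply_le_of_apply_X D d hC hX hp) ((natDegree_C_mul_le _ _).trans hp)

theorem coeff_apply_sub_C_mul {p : A[X]} {n : ℕ} (hp : p.natDegree ≤ n) :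
    (D p - C (n * a) * p).coeff n = d (p.coeff n) := by
  rw [coeff_sub, coeff_C_mul, coeff_apply_of_apply_X D d hC hX,
    coeff_eq_zero_of_natDegree_lt (hp.trans_lt n.lt_succ_self)]
  ring

theorem apply_coeff_of_apply_eq_C_mul {p : A[X]} {m : ℕ}
    (hp : D p = C ((m + 1 : ℕ) * a) * p) (hp1 : p.coeff (m + 1) = 1) :
    d (p.coeff m) = a * p.coeff m - (m + 1 : ℕ) * b := by
  have hm := congrArg (coeff · m) hp
  simp only [coeff_apply_of_apply_X D d hC hX, coeff_C_mul, hp1] at hm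
  push_cast at hm ⊢
  linear_combination hm

variable {I : Ideal A[X]} (hI : ∀ p ∈ I, D p ∈ I)
include hI

theorem apply_mem_leadingCoeffNth {n : ℕ} {x : A} (hx : x ∈ I.leadingCoeffNth n) :
    d x ∈ I.leadingCoeffNth n := by
  obtain ⟨p, hpI, hpn, rfl⟩ := (I.mem_leadingCoeffNth_iff_coeff n x).1 hx
  refine (I.mem_leadingCoeffNth_iff_coeff n _).2 ⟨D p - C (n * a) * p, ?_,
    natDegree_apply_sub_C_mul_le D d hC hX hpn, coeff_apply_sub_C_mul D d hC hX hpn⟩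
  exact I.sub_mem (hI p hpI) (I.mul_mem_left _ hpI)

theorem apply_eq_C_mul_of_natDegree_minimal {n : ℕ}
    (hmin : ∀ q ∈ I, q ≠ 0 → n ≤ q.natDegree) {p : A[X]} (hpI : p ∈ I) (hpn : p.natDegree ≤ n)
    (hp1 : p.coeff n = 1) : D p = C (n * a) * p := by
  rw [← sub_eq_zero]
  by_contra hq
  have hqI : D p - C (n * a) * p ∈ I := I.sub_mem (hI p hpI) (I.mul_mem_left _ hpI)
  have hdeg : (D p - C (n * a) * p).natDegree = n :=
    (natDegree_apply_sub_C_mul_le D d hC hX hpn).antisymm (hmin _ hqI hq)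
  apply leadingCoeff_ne_zero.2 hq
  rw [leadingCoeff, hdeg, coeff_apply_sub_C_mul D d hC hX hpn, hp1, map_one_eq_zero]

end Derivation

theorem stmt_17_general {C : Type*} [CommRing C] [CharZero C]
    (δ : Derivation ℤ (Polynomial C) (Polynomial C)) (δ₀ : C → C)
    (hres : ∀ c : C, δ (Polynomial.C c) = Polynomial.C (δ₀ c))
    (hsimple : ∀ I : Ideal C, (∀ c ∈ I, δ₀ c ∈ I) → I = ⊥ ∨ I = ⊤)
    (a b : C) (ht : δ Polynomial.X = Polynomial.C a * Polynomial.X + Polynomial.C b)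
    (hno : ∀ r : C, δ₀ r ≠ a * r + b) :
    ∀ I : Ideal (Polynomial C), (∀ p ∈ I, δ p ∈ I) → I = ⊥ ∨ I = ⊤ := by
  intro I hI
  set d := δ.restrictPolynomialC δ₀ hres
  refine or_iff_not_imp_left.2 fun hI0 => ?_
  obtain ⟨p₀, hp₀I, hp₀, hmin⟩ := Ideal.exists_mem_ne_zero_forall_natDegree_le hI0
  set n := p₀.natDegree
  have hJ : I.leadingCoeffNth n = ⊤ := by
    refine (hsimple _ fun _ => δ.apply_mem_leadingCoeffNth d hres ht hI).resolve_left
      fun hJ => hp₀ ?_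
    rw [← leadingCoeff_eq_zero, ← Ideal.mem_bot, ← hJ, I.mem_leadingCoeffNth_iff_coeff]
    exact ⟨p₀, hp₀I, le_rfl, rfl⟩
  obtain ⟨p, hpI, hpn, hp1⟩ :=
    (I.mem_leadingCoeffNth_iff_coeff n 1).1 (hJ ▸ Submodule.mem_top)
  have hδp := δ.apply_eq_C_mul_of_natDegree_minimal d hres ht hI hmin hpI hpn hp1
  clear_value n
  rcases n with _ | m
  · refine I.eq_top_of_isUnit_mem hpI ?_
    rw [eq_C_of_natDegree_le_zero hpn, hp1, map_one]
    exact isUnit_one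
  · obtain ⟨r, hr⟩ := d.exists_apply_eq_mul_add_of_isUnit
      (d.isUnit_natCast_of_forall_stable_ideal hsimple m.succ_ne_zero) (d.map_natCast _)
      (δ.apply_coeff_of_apply_eq_C_mul d hres ht hδp hp1)
    exact absurd hr (hno r)

theorem stmt_17 {C : Type*} [CommRing C] [IsDomain C] [CharZero C]
    (δ : Derivation ℤ (Polynomial C) (Polynomial C)) (δ₀ : C → C)
    (hres : ∀ c : C, δ (Polynomial.C c) = Polynomial.C (δ₀ c))
    (hsimple : ∀ I : Ideal C, (∀ c ∈ I, δ₀ c ∈ I) → I = ⊥ ∨ I = ⊤)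
    (a b : C) (ht : δ Polynomial.X = Polynomial.C a * Polynomial.X + Polynomial.C b)
    (hno : ∀ r : C, δ₀ r ≠ a * r + b) :
    ∀ I : Ideal (Polynomial C), (∀ p ∈ I, δ p ∈ I) → I = ⊥ ∨ I = ⊤ :=
  stmt_17_general δ δ₀ hres hsimple a b ht hno
end
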